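/- arXiv:1704.02902 — 11 statements merged into one kernel-verified Lean document; each statement's English description precedes it below -/
import Mathlib

section
/- Let a, b, A1, A2 be real numbers with 0 < a < A1, 0 < b < A2, and a/A1 + b/A2 ≥ 1. Define the sets R1 := {(λ1,λ2) ∈ ℝ² : λ1 ≥ 0, 0 ≤ λ2 < b, λ1 < A1 + (a−A1)·λ2/b} and R2 := {(λ1,λ2) ∈ ℝ² : λ2 ≥ 0, 0 ≤ λ1 < a, λ2 < A2 + (b−A2)·λ1/a}. Then the union R1 ∪ R2 is a convex subset of ℝ². -/
/-! The boundary lines `b λ1 + (A1 - a) λ2 = A1 b` of `R1` and `(A2 - b) λ1 + a λ2 = A2 a` of `R2`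
meet at `(a, b)`. The condition `a/A1 + b/A2 ≥ 1` puts `(A1, 0)` on the origin's side of the second
line and `(0, A2)` on the origin's side of the first, so the union is exactly the part of the
positive quadrant below both lines: an intersection of half-planes. -/

open Set

def stabilityRegion₁ (a b A1 : ℝ) : Set (ℝ × ℝ) :=
  {p | 0 ≤ p.1 ∧ 0 ≤ p.2 ∧ p.2 < b ∧ p.1 < A1 + (a - A1) * p.2 / b}

def stabilityRegion₂ (a b A2 : ℝ) : Set (ℝ × ℝ) :=
  {p | 0 ≤ p.2 ∧ 0 ≤ p.1 ∧ p.1 < a ∧ p.2 < A2 + (b - A2) * p.1 / a}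

def stabilityQuadrilateral (a b A1 A2 : ℝ) : Set (ℝ × ℝ) :=
  {p | 0 ≤ p.1 ∧ 0 ≤ p.2 ∧ b * p.1 + (A1 - a) * p.2 < A1 * b ∧
    (A2 - b) * p.1 + a * p.2 < A2 * a}

theorem convex_setOf_linear_lt (u v c : ℝ) :
    Convex ℝ {p : ℝ × ℝ | u * p.1 + v * p.2 < c} :=
  (convex_Iio c).linear_preimage (u • LinearMap.fst ℝ ℝ ℝ + v • LinearMap.snd ℝ ℝ ℝ)

theorem convex_stabilityQuadrilateral (a b A1 A2 : ℝ) :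
    Convex ℝ (stabilityQuadrilateral a b A1 A2) := by
  simp only [stabilityQuadrilateral, ofPred_and]
  exact ((convex_Ici 0).linear_preimage (LinearMap.fst ℝ ℝ ℝ)).inter
    (((convex_Ici 0).linear_preimage (LinearMap.snd ℝ ℝ ℝ)).inter
      ((convex_setOf_linear_lt _ _ _).inter (convex_setOf_linear_lt _ _ _)))

theorem lt_add_sub_mul_div_iff {a b A x y : ℝ} (hb : 0 < b) :
    x < A + (a - A) * y / b ↔ b * x + (A - a) * y < A * b := by
  rw [show A + (a - A) * y / b = (A * b - (A - a) * y) / b by field_simp; ring,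
    lt_div_iff₀' hb, lt_sub_iff_add_lt]

theorem mul_le_add_of_div_add_div_ge_one {a b A1 A2 : ℝ} (hA1 : 0 < A1) (hA2 : 0 < A2)
    (h : a / A1 + b / A2 ≥ 1) : A1 * A2 ≤ a * A2 + b * A1 := by
  rw [ge_iff_le, div_add_div _ _ hA1.ne' hA2.ne', le_div_iff₀ (mul_pos hA1 hA2), one_mul] at h
  linarith

theorem second_line_of_first_line {a b A1 A2 x y : ℝ} (hb : 0 < b) (hbA2 : b < A2)
    (hc : A1 * A2 ≤ a * A2 + b * A1) (hy : y < b) (h : b * x + (A1 - a) * y < A1 * b) :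
    (A2 - b) * x + a * y < A2 * a := by
  have key : 0 < b * (A2 * a - ((A2 - b) * x + a * y)) := by
    have hslack := mul_nonneg (sub_nonneg.2 hy.le) (sub_nonneg.2 hc)
    have hfirst := mul_pos (sub_pos.2 hbA2) (sub_pos.2 h)
    linear_combination hfirst + hslack
  linarith [pos_of_mul_pos_right key hb.le]

theorem lt_of_first_line {a b A1 x y : ℝ} (hb : 0 < b) (haA1 : a ≤ A1) (hy : b ≤ y)
    (h : b * x + (A1 - a) * y < A1 * b) : x < a := by
  have : b * x < b * a := by linarith [mul_le_mul_of_nonneg_left hy (sub_nonneg.2 haA1)]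
  exact lt_of_mul_lt_mul_left this hb.le

theorem stabilityRegion_union_eq {a b A1 A2 : ℝ} (ha : 0 < a) (haA1 : a < A1) (hb : 0 < b)
    (hbA2 : b < A2) (hc : A1 * A2 ≤ a * A2 + b * A1) :
    stabilityRegion₁ a b A1 ∪ stabilityRegion₂ a b A2 = stabilityQuadrilateral a b A1 A2 := by
  have hc' : A2 * A1 ≤ b * A1 + a * A2 := by linarith
  ext ⟨x, y⟩
  simp only [stabilityRegion₁, stabilityRegion₂, stabilityQuadrilateral, mem_union, mem_ofPred_eq,
    lt_add_sub_mul_div_iff hb, lt_add_sub_mul_div_iff ha]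
  constructor
  · rintro (⟨hx, hy, hyb, h₁⟩ | ⟨hy, hx, hxa, h₂⟩)
    · exact ⟨hx, hy, h₁, second_line_of_first_line hb hbA2 hc hyb h₁⟩
    · refine ⟨hx, hy, ?_, by linarith⟩
      have h₂' : a * y + (A2 - b) * x < A2 * a := by linarith
      linarith [second_line_of_first_line ha haA1 hc' hxa h₂']
  · rintro ⟨hx, hy, h₁, h₂⟩
    rcases lt_or_ge y b with hyb | hby
    · exact Or.inl ⟨hx, hy, hyb, h₁⟩
    · exact Or.inr ⟨hy, hx, lt_of_first_line hb haA1.le hby h₁, by linarith⟩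

/-- The stability region `R1 ∪ R2` of the two-user queue-aware random access
system is convex when `a/A1 + b/A2 ≥ 1`. -/
theorem stability_region_convex (a b A1 A2 : ℝ)
    (ha : 0 < a) (haA1 : a < A1) (hb : 0 < b) (hbA2 : b < A2)
    (hconv : a / A1 + b / A2 ≥ 1) :
    Convex ℝ
      (({p : ℝ × ℝ | 0 ≤ p.1 ∧ 0 ≤ p.2 ∧ p.2 < b ∧
          p.1 < A1 + (a - A1) * p.2 / b} ∪
        {p : ℝ × ℝ | 0 ≤ p.2 ∧ 0 ≤ p.1 ∧ p.1 < a ∧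
          p.2 < A2 + (b - A2) * p.1 / a}) : Set (ℝ × ℝ)) := by
  have hc := mul_le_add_of_div_add_div_ge_one (ha.trans haA1) (hb.trans hbA2) hconv
  change Convex ℝ (stabilityRegion₁ a b A1 ∪ stabilityRegion₂ a b A2)
  rw [stabilityRegion_union_eq ha haA1 hb hbA2 hc]
  exact convex_stabilityQuadrilateral a b A1 A2
end

section
/- Let a, b, A1, A2 be real numbers with a > 0, b > 0, A1 > 0, A2 > 0 and a·A2 + b·A1 = A1·A2 (i.e., a/A1 + b/A2 = 1). Define R1 := {(λ1,λ2) ∈ ℝ² : λ1 ≥ 0, 0 ≤ λ2 < b, λ1 < A1 + (a−A1)·λ2/b} and R2 := {(λ1,λ2) ∈ ℝ² : λ2 ≥ 0, 0 ≤ λ1 < a, λ2 < A2 + (b−A2)·λ1/a}. Then R1 ∪ R2 = {(λ1,λ2) ∈ ℝ² : λ1 ≥ 0, λ2 ≥ 0, λ1/A1 + λ2/A2 < 1}, i.e., the stability region is exactly the open triangle with legs A1 and A2 (the time-sharing region). -/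
/-! Since `a/A1 + b/A2 = 1`, the corner `(a, b)` shared by `R1` and `R2` lies on the hypotenuse
of the triangle, so the slanted edge of each `Ri` is a piece of that hypotenuse: `R1` is the
triangle cut to `λ2 < b` and `R2` the triangle cut to `λ1 < a`. These two cuts cover the
triangle, because `λ1 ≥ a` and `λ2 ≥ b` would force `λ1/A1 + λ2/A2 ≥ a/A1 + b/A2 = 1`. -/

lemma chord_eq_hypotenuse {a b A1 A2 : ℝ} (hb : b ≠ 0) (hA2 : A2 ≠ 0)
    (heq : a * A2 + b * A1 = A1 * A2) (y : ℝ) :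
    A1 + (a - A1) * y / b = A1 * (1 - y / A2) := by
  field_simp
  linear_combination y * heq

lemma lt_mul_one_sub_div_iff {A1 A2 : ℝ} (hA1 : 0 < A1) (x y : ℝ) :
    x < A1 * (1 - y / A2) ↔ x / A1 + y / A2 < 1 := by
  rw [← div_lt_iff₀' hA1]
  constructor <;> intro h <;> linarith

lemma lt_or_lt_of_div_add_div_lt_one {a b A1 A2 x y : ℝ} (hA1 : 0 < A1) (hA2 : 0 < A2)
    (heq : a * A2 + b * A1 = A1 * A2) (h : x / A1 + y / A2 < 1) : y < b ∨ x < a := by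
  by_contra! hge
  have corner_on_hypotenuse : a / A1 + b / A2 = 1 := by
    field_simp
    linarith
  have : a / A1 + b / A2 ≤ x / A1 + y / A2 := by
    gcongr
    exacts [hge.2, hge.1]
  linarith

/-- When `a/A1 + b/A2 = 1`, the stability region `R1 ∪ R2` coincides with the
open time-sharing triangle with legs `A1` and `A2`. -/
theorem stability_region_triangle (a b A1 A2 : ℝ)
    (ha : 0 < a) (hb : 0 < b) (hA1 : 0 < A1) (hA2 : 0 < A2)
    (heq : a * A2 + b * A1 = A1 * A2) :
    ({p : ℝ × ℝ | 0 ≤ p.1 ∧ 0 ≤ p.2 ∧ p.2 < b ∧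
        p.1 < A1 + (a - A1) * p.2 / b} ∪
      {p : ℝ × ℝ | 0 ≤ p.2 ∧ 0 ≤ p.1 ∧ p.1 < a ∧
        p.2 < A2 + (b - A2) * p.1 / a}) =
    {p : ℝ × ℝ | 0 ≤ p.1 ∧ 0 ≤ p.2 ∧ p.1 / A1 + p.2 / A2 < 1} := by
  have heq' : b * A1 + a * A2 = A2 * A1 := by linear_combination heq
  ext ⟨x, y⟩
  simp only [Set.mem_union, Set.mem_ofPred_eq, chord_eq_hypotenuse hb.ne' hA2.ne' heq,
    chord_eq_hypotenuse ha.ne' hA1.ne' heq', lt_mul_one_sub_div_iff hA1,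
    lt_mul_one_sub_div_iff hA2, add_comm (y / A2)]
  constructor
  · rintro (⟨hx, hy, -, h⟩ | ⟨hy, hx, -, h⟩) <;> exact ⟨hx, hy, h⟩
  · rintro ⟨hx, hy, h⟩
    rcases lt_or_lt_of_div_add_div_lt_one hA1 hA2 heq h with hyb | hxa
    exacts [Or.inl ⟨hx, hy, hyb, h⟩, Or.inr ⟨hy, hx, hxa, h⟩]
end

section
/- Let λ1 ≥ 0, λ2 > 0 and a ≥ 0, b ≥ 0 be real numbers with a + b ≤ 1. Then for all complex x, y with ‖x‖ = 1, ‖y‖ = 1 and y ≠ 1, one has ‖xy(1 − a − b) + y·a + x·b‖ < ‖(1 + λ1(1−x))·(1 + λ2(1−y))‖; equivalently, ‖Ψ(x,y)‖ < 1 where Ψ(x,y) := (xy(1−a−b) + ya + xb)/((1+λ1(1−x))(1+λ2(1−y))). -/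
/-! The numerator is a convex combination of the unimodular numbers `xy`, `y`, `x`, so its norm is
at most `1`. Each denominator factor `1 + l(1 - x)` has real part `1 + l(1 - Re x) ≥ 1`, and the
inequality is strict for the `y`-factor because `λ₂ > 0` and `Re y < 1` on the circle minus `1`. -/

namespace Complex

lemma re_lt_one_of_norm_le_one_of_ne_one {x : ℂ} (hx : ‖x‖ ≤ 1) (hx1 : x ≠ 1) : x.re < 1 := by
  refine (x.re_le_norm.trans hx).lt_of_ne fun hre ↦ hx1 (ext hre ?_)
  have hnorm : |x.re| = ‖x‖ := by
    rw [hre, abs_one]; exact le_antisymm (hre ▸ x.re_le_norm) hx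
  exact abs_re_eq_norm.mp hnorm

lemma re_one_add_mul_one_sub (l : ℝ) (x : ℂ) : (1 + l * (1 - x)).re = 1 + l * (1 - x.re) := by
  simp

lemma one_le_norm_one_add_mul_one_sub {l : ℝ} (hl : 0 ≤ l) {x : ℂ} (hx : ‖x‖ ≤ 1) :
    1 ≤ ‖1 + l * (1 - x)‖ := by
  have : 0 ≤ l * (1 - x.re) := mul_nonneg hl (by linarith [x.re_le_norm])
  calc 1 ≤ (1 + l * (1 - x)).re := by rw [re_one_add_mul_one_sub]; linarith
    _ ≤ _ := re_le_norm _

lemma one_lt_norm_one_add_mul_one_sub {l : ℝ} (hl : 0 < l) {x : ℂ} (hx : ‖x‖ ≤ 1) (hx1 : x ≠ 1) :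
    1 < ‖1 + l * (1 - x)‖ := by
  have : 0 < l * (1 - x.re) :=
    mul_pos hl (by linarith [re_lt_one_of_norm_le_one_of_ne_one hx hx1])
  calc 1 < (1 + l * (1 - x)).re := by rw [re_one_add_mul_one_sub]; linarith
    _ ≤ _ := re_le_norm _

lemma norm_convex_combination_le_one {a b : ℝ} (ha : 0 ≤ a) (hb : 0 ≤ b) (hab : a + b ≤ 1)
    {x y : ℂ} (hx : ‖x‖ ≤ 1) (hy : ‖y‖ ≤ 1) :
    ‖x * y * (1 - (a : ℂ) - (b : ℂ)) + y * (a : ℂ) + x * (b : ℂ)‖ ≤ 1 := by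
  have hc : (1 - (a : ℂ) - (b : ℂ)) = ((1 - a - b : ℝ) : ℂ) := by push_cast; ring
  calc _ ≤ ‖x * y * (1 - (a : ℂ) - (b : ℂ))‖ + ‖y * (a : ℂ)‖ + ‖x * (b : ℂ)‖ :=
        norm_add₃_le
    _ = ‖x‖ * ‖y‖ * (1 - a - b) + ‖y‖ * a + ‖x‖ * b := by
        simp only [hc, norm_mul, norm_real, Real.norm_of_nonneg ha, Real.norm_of_nonneg hb,
          Real.norm_of_nonneg (show 0 ≤ 1 - a - b by linarith)]
    _ ≤ 1 * 1 * (1 - a - b) + 1 * a + 1 * b := by gcongr; linarith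
    _ = 1 := by ring

end Complex

/-- The Rouché inequality `‖Ψ(x,y)‖ < 1` on the torus (with `y ≠ 1`) used in
the proof of Lemma 1. -/
theorem psi_norm_lt_one (l1 l2 a b : ℝ)
    (hl1 : 0 ≤ l1) (hl2 : 0 < l2) (ha : 0 ≤ a) (hb : 0 ≤ b) (hab : a + b ≤ 1)
    (x y : ℂ) (hx : ‖x‖ = 1) (hy : ‖y‖ = 1) (hy1 : y ≠ 1) :
    ‖x * y * (1 - (a : ℂ) - (b : ℂ)) + y * (a : ℂ) + x * (b : ℂ)‖ <
      ‖(1 + (l1 : ℂ) * (1 - x)) * (1 + (l2 : ℂ) * (1 - y))‖ ∧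
    ‖(x * y * (1 - (a : ℂ) - (b : ℂ)) + y * (a : ℂ) + x * (b : ℂ)) /
        ((1 + (l1 : ℂ) * (1 - x)) * (1 + (l2 : ℂ) * (1 - y)))‖ < 1 := by
  have hnum := Complex.norm_convex_combination_le_one ha hb hab hx.le hy.le
  have hden : 1 < ‖(1 + (l1 : ℂ) * (1 - x)) * (1 + (l2 : ℂ) * (1 - y))‖ := by
    rw [norm_mul]
    exact one_lt_mul_of_le_of_lt (Complex.one_le_norm_one_add_mul_one_sub hl1 hx.le)
      (Complex.one_lt_norm_one_add_mul_one_sub hl2 hy.le hy1)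
  refine ⟨hnum.trans_lt hden, ?_⟩
  rw [norm_div, div_lt_one (zero_lt_one.trans hden)]
  exact hnum.trans_lt hden
end

section
/- Let λ1 > 0 and a > 0 be real. For every nonzero complex x with 1 + λ1(1−x) ≠ 0, the kernel at y = 1 factors as R(x,1) = (x − 1)·(a/x − λ1). Consequently, if λ1 < a, then the only complex x with ‖x‖ ≤ 1, x ≠ 0, and R(x,1) = 0 is x = 1. -/
theorem mul_one_sub_add_mul_one_sub_one_div {K : Type*} [Field K] {x : K} (hx : x ≠ 0) (l a : K) :
    l * (1 - x) + a * (1 - 1 / x) = (x - 1) * (a / x - l) := by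
  field_simp
  ring

theorem Complex.ofReal_ne_ofReal_mul_of_norm_le_one {l a : ℝ} {x : ℂ} (hl : 0 ≤ l) (hla : l < a)
    (hx : ‖x‖ ≤ 1) : (a : ℂ) ≠ l * x := by
  intro h
  have hnorm : |a| = l * ‖x‖ := by
    simpa [Complex.norm_real, abs_of_nonneg hl] using congrArg norm h
  linarith [le_abs_self a, mul_le_of_le_one_right hl hx]

theorem kernel_at_one_general (l1 l2 a b : ℝ) (hl1 : 0 < l1) :
    let R : ℂ → ℂ → ℂ := fun x y =>
      (1 + (l1 : ℂ) * (1 - x)) * (1 + (l2 : ℂ) * (1 - y)) - 1 +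
        (a : ℂ) * (1 - 1 / x) + (b : ℂ) * (1 - 1 / y)
    (∀ x : ℂ, x ≠ 0 → 1 + (l1 : ℂ) * (1 - x) ≠ 0 →
      R x 1 = (x - 1) * ((a : ℂ) / x - (l1 : ℂ))) ∧
    (l1 < a → ∀ x : ℂ, ‖x‖ ≤ 1 → x ≠ 0 → R x 1 = 0 → x = 1) := by
  intro R
  have factor : ∀ x : ℂ, x ≠ 0 → R x 1 = (x - 1) * ((a : ℂ) / x - (l1 : ℂ)) := fun x hx => by
    rw [← mul_one_sub_add_mul_one_sub_one_div hx]
    simp only [R]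
    ring
  refine ⟨fun x hx _ => factor x hx, fun hla x hx1 hx0 hR => ?_⟩
  rw [factor x hx0, mul_eq_zero, sub_eq_zero, sub_eq_zero, div_eq_iff hx0] at hR
  exact hR.resolve_right (Complex.ofReal_ne_ofReal_mul_of_norm_le_one hl1.le hla hx1)

/-- Lemma 1, second assertion: the kernel at `y = 1` factors as
`R(x,1) = (x − 1)·(a/x − λ1)`; consequently, if `λ1 < a`, the only root of
`R(·,1)` in the closed unit disk is `x = 1`. -/
theorem kernel_at_one (l1 l2 a b : ℝ) (hl1 : 0 < l1) (ha : 0 < a) :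
    let R : ℂ → ℂ → ℂ := fun x y =>
      (1 + (l1 : ℂ) * (1 - x)) * (1 + (l2 : ℂ) * (1 - y)) - 1 +
        (a : ℂ) * (1 - 1 / x) + (b : ℂ) * (1 - 1 / y)
    (∀ x : ℂ, x ≠ 0 → 1 + (l1 : ℂ) * (1 - x) ≠ 0 →
      R x 1 = (x - 1) * ((a : ℂ) / x - (l1 : ℂ))) ∧
    (l1 < a → ∀ x : ℂ, ‖x‖ ≤ 1 → x ≠ 0 → R x 1 = 0 → x = 1) :=
  kernel_at_one_general l1 l2 a b hl1
end

section
/- Let λ1 > 0, λ2 > 0, a > 0, b > 0 be real with a + b ≤ 1, λ1 < a, and λ2 < b. Define a(x) := λ2·x·(λ1(x−1) − 1), b(x) := x·(λ1+λ2+λ1λ2+a+b) − a − λ1(1+λ2)·x², c(x) := −b·x, and D_x(x) := b(x)² − 4·a(x)·c(x). Then there exist real numbers x1, x2, x3, x4 with 0 < x1 < x2 ≤ 1 < x3 < x4 < (1+λ1)/λ1 such that D_x(x) < 0 for all x ∈ (x1,x2) ∪ (x3,x4) and D_x(x) > 0 for all x ∈ (−∞,x1) ∪ (x2,x3) ∪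 (x4,∞). -/
/-!
Write `D(x) = b(x)² + 4 b λ₂ x² (λ₁(x − 1) − 1)` and let `s = (1 + λ₁)/λ₁` be the zero of
`λ₁(x − 1) − 1`. The concave quadratic `b(x)` is `−a < 0` at `0`, `λ₂ + b > 0` at `1` and, because
`a + b ≤ 1`, negative at `s`, so it vanishes at some `r₁ ∈ (0, 1)` and `r₂ ∈ (1, s)`. There `D < 0`,
while `D(0) = a²`, `D(1) = (λ₂ − b)²` and `D(s) = b(s)²` are positive. The intermediate value
theorem gives four zeros of `D`, in `(0, r₁)`, `(r₁, 1)`, `(1, r₂)` and `(r₂, s)`; as `D` is a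
quartic with leading coefficient `(λ₁(1 + λ₂))² > 0`, they are all of its zeros and the sign
pattern is read off the factorisation.
-/

open Polynomial Set

theorem Polynomial.eq_C_leadingCoeff_mul_prod_of_isRoot {R : Type*} [CommRing R] [IsDomain R]
    {p : R[X]} {s : Finset R} (hroots : ∀ y ∈ s, p.IsRoot y) (hcard : p.natDegree = s.card) :
    p = C p.leadingCoeff * ∏ y ∈ s, (X - C y) := by
  rcases eq_or_ne p 0 with rfl | hp
  · simp
  have hsub : s.val ≤ p.roots :=
    (Multiset.le_iff_subset s.nodup).mpr fun y hy => (mem_roots hp).mpr (hroots y hy)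
  have heq : s.val = p.roots :=
    Multiset.eq_of_le_of_card_le hsub ((card_roots' p).trans hcard.le)
  have hfactor :=
    C_leadingCoeff_mul_prod_multiset_X_sub_C (p := p) (by rw [← heq]; exact hcard.symm)
  rw [← heq] at hfactor
  exact hfactor.symm

theorem four_factor_prod_neg {x₁ x₂ x₃ x₄ x : ℝ} (h₁₂ : x₁ < x₂) (h₂₃ : x₂ < x₃) (h₃₄ : x₃ < x₄)
    (hx : x ∈ Ioo x₁ x₂ ∪ Ioo x₃ x₄) : (x - x₁) * ((x - x₂) * ((x - x₃) * (x - x₄))) < 0 := by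
  rcases hx with ⟨h₁, h₂⟩ | ⟨h₃, h₄⟩
  · have h₃ : x < x₃ := h₂.trans h₂₃
    exact mul_neg_of_pos_of_neg (sub_pos.mpr h₁) <| mul_neg_of_neg_of_pos (sub_neg.mpr h₂) <|
      mul_pos_of_neg_of_neg (sub_neg.mpr h₃) (sub_neg.mpr (h₃.trans h₃₄))
  · have h₂ : x₂ < x := h₂₃.trans h₃
    exact mul_neg_of_pos_of_neg (sub_pos.mpr (h₁₂.trans h₂)) <|
      mul_neg_of_pos_of_neg (sub_pos.mpr h₂) <|
        mul_neg_of_pos_of_neg (sub_pos.mpr h₃) (sub_neg.mpr h₄)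

theorem four_factor_prod_pos {x₁ x₂ x₃ x₄ x : ℝ} (h₁₂ : x₁ < x₂) (h₂₃ : x₂ < x₃) (h₃₄ : x₃ < x₄)
    (hx : x ∈ Iio x₁ ∪ Ioo x₂ x₃ ∪ Ioi x₄) : 0 < (x - x₁) * ((x - x₂) * ((x - x₃) * (x - x₄))) := by
  rcases hx with (h₁ | ⟨h₂, h₃⟩) | h₄
  · have h₂ : x < x₂ := h₁.trans h₁₂
    have h₃ : x < x₃ := h₂.trans h₂₃
    exact mul_pos_of_neg_of_neg (sub_neg.mpr h₁) <| mul_neg_of_neg_of_pos (sub_neg.mpr h₂) <|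
      mul_pos_of_neg_of_neg (sub_neg.mpr h₃) (sub_neg.mpr (h₃.trans h₃₄))
  · exact mul_pos (sub_pos.mpr (h₁₂.trans h₂)) <| mul_pos (sub_pos.mpr h₂) <|
      mul_pos_of_neg_of_neg (sub_neg.mpr h₃) (sub_neg.mpr (h₃.trans h₃₄))
  · have h₃ : x₃ < x := h₃₄.trans h₄
    have h₂ : x₂ < x := h₂₃.trans h₃
    exact mul_pos (sub_pos.mpr (h₁₂.trans h₂)) <| mul_pos (sub_pos.mpr h₂) <|
      mul_pos (sub_pos.mpr h₃) (sub_pos.mpr h₄)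

section CaptureKernel

variable (l1 l2 a b : ℝ)

/-- The paper's `b(x)`, the coefficient of `y` in the kernel (not the parameter `b`). -/
def kernelCoeffY (x : ℝ) : ℝ := x * (l1 + l2 + l1 * l2 + a + b) - a - l1 * (1 + l2) * x ^ 2

def kernelDisc (x : ℝ) : ℝ :=
  kernelCoeffY l1 l2 a b x ^ 2 - 4 * (l2 * x * (l1 * (x - 1) - 1)) * (-b * x)

noncomputable def kernelDiscPoly : ℝ[X] :=
  (X * C (l1 + l2 + l1 * l2 + a + b) - C a - C (l1 * (1 + l2)) * X ^ 2) ^ 2 +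
    C (4 * b * l2) * X ^ 2 * (C l1 * (X - 1) - 1)

theorem kernelDisc_eq (x : ℝ) :
    kernelDisc l1 l2 a b x =
      kernelCoeffY l1 l2 a b x ^ 2 + 4 * b * l2 * x ^ 2 * (l1 * (x - 1) - 1) := by
  unfold kernelDisc; ring

theorem eval_kernelDiscPoly (x : ℝ) :
    (kernelDiscPoly l1 l2 a b).eval x = kernelDisc l1 l2 a b x := by
  simp only [kernelDiscPoly, kernelDisc_eq, kernelCoeffY, eval_add, eval_sub, eval_mul, eval_pow,
    eval_C, eval_X, eval_one]

theorem coeff_kernelDiscPoly_four : (kernelDiscPoly l1 l2 a b).coeff 4 = (l1 * (1 + l2)) ^ 2 := by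
  simp [kernelDiscPoly, sq, coeff_mul, Finset.Nat.antidiagonal_succ, coeff_X, coeff_C, coeff_one]

variable {l1 l2}

theorem natDegree_kernelDiscPoly (h : l1 * (1 + l2) ≠ 0) :
    (kernelDiscPoly l1 l2 a b).natDegree = 4 := by
  unfold kernelDiscPoly
  compute_degree!
  simpa using h

variable {a b}

theorem kernelDisc_eq_mul_prod (h : l1 * (1 + l2) ≠ 0) {x₁ x₂ x₃ x₄ : ℝ}
    (h₁₂ : x₁ < x₂) (h₂₃ : x₂ < x₃) (h₃₄ : x₃ < x₄)
    (h₁ : kernelDisc l1 l2 a b x₁ = 0) (h₂ : kernelDisc l1 l2 a b x₂ = 0)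
    (h₃ : kernelDisc l1 l2 a b x₃ = 0) (h₄ : kernelDisc l1 l2 a b x₄ = 0) (x : ℝ) :
    kernelDisc l1 l2 a b x =
      (l1 * (1 + l2)) ^ 2 * ((x - x₁) * ((x - x₂) * ((x - x₃) * (x - x₄)))) := by
  have hroots : ∀ y ∈ ({x₁, x₂, x₃, x₄} : Finset ℝ), (kernelDiscPoly l1 l2 a b).IsRoot y := by
    simp only [Finset.mem_insert, Finset.mem_singleton, IsRoot, eval_kernelDiscPoly]
    rintro y (rfl | rfl | rfl | rfl) <;> assumption
  have hcard : (kernelDiscPoly l1 l2 a b).natDegree = ({x₁, x₂, x₃, x₄} : Finset ℝ).card := by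
    rw [natDegree_kernelDiscPoly a b h]
    simp [Finset.card_insert_of_notMem, h₁₂.ne, h₂₃.ne, h₃₄.ne, (h₁₂.trans h₂₃).ne,
      (h₂₃.trans h₃₄).ne, (h₁₂.trans (h₂₃.trans h₃₄)).ne]
  rw [← eval_kernelDiscPoly, eq_C_leadingCoeff_mul_prod_of_isRoot hroots hcard, leadingCoeff,
    natDegree_kernelDiscPoly a b h, coeff_kernelDiscPoly_four]
  simp [Finset.prod_insert, h₁₂.ne, h₂₃.ne, h₃₄.ne, (h₁₂.trans h₂₃).ne, (h₂₃.trans h₃₄).ne,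
    (h₁₂.trans (h₂₃.trans h₃₄)).ne]

theorem kernelCoeffY_one_add_div_neg (hl1 : 0 < l1) (ha : 0 < a) (hab : a + b ≤ 1) :
    kernelCoeffY l1 l2 a b ((1 + l1) / l1) < 0 := by
  have hscaled : l1 ^ 2 * kernelCoeffY l1 l2 a b ((1 + l1) / l1) =
      l1 * (1 + l1) * (a + b - 1) - a * l1 ^ 2 := by
    unfold kernelCoeffY; field_simp; ring
  have hfirst : l1 * (1 + l1) * (a + b - 1) ≤ 0 :=
    mul_nonpos_of_nonneg_of_nonpos (by positivity) (by linarith)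
  have hsecond : 0 < a * l1 ^ 2 := by positivity
  have hneg : l1 ^ 2 * kernelCoeffY l1 l2 a b ((1 + l1) / l1) < 0 := by
    rw [hscaled]; linarith
  exact neg_of_mul_neg_right hneg (sq_nonneg l1)

theorem exists_roots_kernelCoeffY (hl1 : 0 < l1) (hl2 : 0 < l2) (ha : 0 < a) (hb : 0 < b)
    (hab : a + b ≤ 1) :
    ∃ r₁ r₂, r₁ ∈ Ioo 0 1 ∧ r₂ ∈ Ioo 1 ((1 + l1) / l1) ∧
      kernelCoeffY l1 l2 a b r₁ = 0 ∧ kernelCoeffY l1 l2 a b r₂ = 0 := by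
  have hcont : Continuous (kernelCoeffY l1 l2 a b) := by unfold kernelCoeffY; fun_prop
  have h₀ : kernelCoeffY l1 l2 a b 0 = -a := by unfold kernelCoeffY; ring
  have h₁ : kernelCoeffY l1 l2 a b 1 = l2 + b := by unfold kernelCoeffY; ring
  have hs : 1 < (1 + l1) / l1 := by rw [lt_div_iff₀ hl1]; linarith
  obtain ⟨r₁, hr₁, hgr₁⟩ := intermediate_value_Ioo zero_le_one hcont.continuousOn
    (show (0 : ℝ) ∈ Ioo _ _ by rw [h₀, h₁]; constructor <;> linarith)
  obtain ⟨r₂, hr₂, hgr₂⟩ := intermediate_value_Ioo' hs.le hcont.continuousOn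
    (show (0 : ℝ) ∈ Ioo _ _ by
      rw [h₁]; exact ⟨kernelCoeffY_one_add_div_neg hl1 ha hab, by linarith⟩)
  exact ⟨r₁, r₂, hr₁, hr₂, hgr₁, hgr₂⟩

theorem kernelDisc_neg_of_kernelCoeffY_eq_zero (hl1 : 0 < l1) (hl2 : 0 < l2) (hb : 0 < b) {x : ℝ}
    (hx₀ : x ≠ 0) (hxs : x < (1 + l1) / l1) (hx : kernelCoeffY l1 l2 a b x = 0) :
    kernelDisc l1 l2 a b x < 0 := by
  have hfactor : l1 * (x - 1) - 1 < 0 := by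
    rw [lt_div_iff₀ hl1] at hxs; linarith
  rw [kernelDisc_eq, hx, zero_pow two_ne_zero, zero_add]
  exact mul_neg_of_pos_of_neg (by positivity) hfactor

theorem exists_four_roots_kernelDisc (hl1 : 0 < l1) (hl2 : 0 < l2) (ha : 0 < a) (hb : 0 < b)
    (hab : a + b ≤ 1) (hst2 : l2 < b) :
    ∃ x₁ x₂ x₃ x₄, 0 < x₁ ∧ x₁ < x₂ ∧ x₂ < 1 ∧ 1 < x₃ ∧ x₃ < x₄ ∧ x₄ < (1 + l1) / l1 ∧
      kernelDisc l1 l2 a b x₁ = 0 ∧ kernelDisc l1 l2 a b x₂ = 0 ∧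
      kernelDisc l1 l2 a b x₃ = 0 ∧ kernelDisc l1 l2 a b x₄ = 0 := by
  obtain ⟨r₁, r₂, hr₁, hr₂, hgr₁, hgr₂⟩ := exists_roots_kernelCoeffY hl1 hl2 ha hb hab
  have hcont : Continuous (kernelDisc l1 l2 a b) := by
    unfold kernelDisc kernelCoeffY; fun_prop
  have hD₀ : 0 < kernelDisc l1 l2 a b 0 := by
    rw [show kernelDisc l1 l2 a b 0 = a ^ 2 by unfold kernelDisc kernelCoeffY; ring]
    positivity
  have hD₁ : 0 < kernelDisc l1 l2 a b 1 := by
    rw [show kernelDisc l1 l2 a b 1 = (l2 - b) ^ 2 by unfold kernelDisc kernelCoeffY; ring]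
    exact sq_pos_of_neg (sub_neg.mpr hst2)
  have hDs : 0 < kernelDisc l1 l2 a b ((1 + l1) / l1) := by
    have hvanish : l1 * ((1 + l1) / l1 - 1) - 1 = 0 := by field_simp; ring
    rw [kernelDisc_eq, hvanish, mul_zero, add_zero]
    exact sq_pos_of_neg (kernelCoeffY_one_add_div_neg hl1 ha hab)
  have hDr₁ := kernelDisc_neg_of_kernelCoeffY_eq_zero hl1 hl2 hb hr₁.1.ne'
    (hr₁.2.trans (hr₂.1.trans hr₂.2)) hgr₁
  have hDr₂ := kernelDisc_neg_of_kernelCoeffY_eq_zero hl1 hl2 hb (zero_lt_one.trans hr₂.1).ne'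
    hr₂.2 hgr₂
  obtain ⟨x₁, hx₁, hDx₁⟩ := intermediate_value_Ioo' hr₁.1.le hcont.continuousOn ⟨hDr₁, hD₀⟩
  obtain ⟨x₂, hx₂, hDx₂⟩ := intermediate_value_Ioo hr₁.2.le hcont.continuousOn ⟨hDr₁, hD₁⟩
  obtain ⟨x₃, hx₃, hDx₃⟩ := intermediate_value_Ioo' hr₂.1.le hcont.continuousOn ⟨hDr₂, hD₁⟩
  obtain ⟨x₄, hx₄, hDx₄⟩ := intermediate_value_Ioo hr₂.2.le hcont.continuousOn ⟨hDr₂, hDs⟩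
  exact ⟨x₁, x₂, x₃, x₄, hx₁.1, hx₁.2.trans hx₂.1, hx₂.2, hx₃.1, hx₃.2.trans hx₄.1, hx₄.2,
    hDx₁, hDx₂, hDx₃, hDx₄⟩

end CaptureKernel

theorem branch_points_x_general (l1 l2 a b : ℝ)
    (hl1 : 0 < l1) (hl2 : 0 < l2) (ha : 0 < a) (hb : 0 < b)
    (hab : a + b ≤ 1) (hst2 : l2 < b) :
    ∃ x1 x2 x3 x4 : ℝ,
      0 < x1 ∧ x1 < x2 ∧ x2 ≤ 1 ∧ 1 < x3 ∧ x3 < x4 ∧ x4 < (1 + l1) / l1 ∧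
      (∀ x : ℝ, x ∈ Set.Ioo x1 x2 ∪ Set.Ioo x3 x4 →
        (x * (l1 + l2 + l1 * l2 + a + b) - a - l1 * (1 + l2) * x ^ 2) ^ 2 -
          4 * (l2 * x * (l1 * (x - 1) - 1)) * (-b * x) < 0) ∧
      (∀ x : ℝ, x ∈ Set.Iio x1 ∪ Set.Ioo x2 x3 ∪ Set.Ioi x4 →
        0 < (x * (l1 + l2 + l1 * l2 + a + b) - a - l1 * (1 + l2) * x ^ 2) ^ 2 -
          4 * (l2 * x * (l1 * (x - 1) - 1)) * (-b * x)) := by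
  obtain ⟨x₁, x₂, x₃, x₄, hx₁, h₁₂, h₂, h₃, h₃₄, hx₄, hD₁, hD₂, hD₃, hD₄⟩ :=
    exists_four_roots_kernelDisc hl1 hl2 ha hb hab hst2
  have h₂₃ : x₂ < x₃ := h₂.trans h₃
  have hc : 0 < l1 * (1 + l2) := by positivity
  have hlead := pow_pos hc 2
  have hfactor := kernelDisc_eq_mul_prod hc.ne' h₁₂ h₂₃ h₃₄ hD₁ hD₂ hD₃ hD₄
  refine ⟨x₁, x₂, x₃, x₄, hx₁, h₁₂, h₂.le, h₃, h₃₄, hx₄, fun x hx => ?_, fun x hx => ?_⟩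
  · change kernelDisc l1 l2 a b x < 0
    rw [hfactor]
    exact mul_neg_of_pos_of_neg hlead (four_factor_prod_neg h₁₂ h₂₃ h₃₄ hx)
  · change 0 < kernelDisc l1 l2 a b x
    rw [hfactor]
    exact mul_pos hlead (four_factor_prod_pos h₁₂ h₂₃ h₃₄ hx)

/-- Lemma 2, first part: the discriminant `D_x(x) = b(x)² − 4a(x)c(x)` of the
kernel, viewed as a quadratic in `y`, has four real branch points
`0 < x1 < x2 ≤ 1 < x3 < x4 < (1+λ1)/λ1`, is negative on
`(x1,x2) ∪ (x3,x4)` and positive on `(−∞,x1) ∪ (x2,x3) ∪ (x4,∞)`. -/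
theorem branch_points_x (l1 l2 a b : ℝ)
    (hl1 : 0 < l1) (hl2 : 0 < l2) (ha : 0 < a) (hb : 0 < b)
    (hab : a + b ≤ 1) (hst1 : l1 < a) (hst2 : l2 < b) :
    ∃ x1 x2 x3 x4 : ℝ,
      0 < x1 ∧ x1 < x2 ∧ x2 ≤ 1 ∧ 1 < x3 ∧ x3 < x4 ∧ x4 < (1 + l1) / l1 ∧
      (∀ x : ℝ, x ∈ Set.Ioo x1 x2 ∪ Set.Ioo x3 x4 →
        (x * (l1 + l2 + l1 * l2 + a + b) - a - l1 * (1 + l2) * x ^ 2) ^ 2 -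
          4 * (l2 * x * (l1 * (x - 1) - 1)) * (-b * x) < 0) ∧
      (∀ x : ℝ, x ∈ Set.Iio x1 ∪ Set.Ioo x2 x3 ∪ Set.Ioi x4 →
        0 < (x * (l1 + l2 + l1 * l2 + a + b) - a - l1 * (1 + l2) * x ^ 2) ^ 2 -
          4 * (l2 * x * (l1 * (x - 1) - 1)) * (-b * x)) :=
  branch_points_x_general l1 l2 a b hl1 hl2 ha hb hab hst2
end

section
/- Let λ1 > 0, λ2 > 0, a > 0, b > 0 be real with a + b ≤ 1, λ1 < a, and λ2 < b. Define â(y) := λ1·y·(λ2(y−1) − 1), b̂(y) := y·(λ1+λ2+λ1λ2+a+b) − b − λ2(1+λ1)·y², ĉ(y) := −a·y, and D_y(y) := b̂(y)² − 4·â(y)·ĉ(y). Then there exist real numbers y1, y2, y3, y4 with 0 ≤ y1 < y2 ≤ 1 < y3 < y4 < (1+λ2)/λ2 such that D_y(y) < 0 for all y ∈ (y1,y2) ∪ (y3,y4) and D_y(y) > 0 for all y ∈ (−∞,y1) ∪ (y2,y3) ∪ (y4,∞). -/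
/-!
Since `â(y) ĉ(y) = a l1 y² (1 + l2 - l2 y)`, the discriminant is
`D_y = b̂² - 4 a l1 y² (1 + l2 - l2 y)`. It is positive at `0`, `1` and `(1 + l2) / l2`
(where it equals `b²`, `(a - l1)²` and `b̂²`), while `b̂` has a zero in `(0, 1)` and one in
`(1, (1 + l2) / l2)`, at which `D_y < 0`. The intermediate value theorem gives four zeros of the
quartic `D_y`; these are all of them, so `D_y = c ∏ (y - yᵢ)` with `c > 0` because `D_y(0) > 0`,
and the signs can be read off.
-/

open Polynomial Set

theorem Polynomial.C_leadingCoeff_mul_prod_multiset_X_sub_C_of_nodup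
    {R : Type*} [CommRing R] [IsDomain R] {p : R[X]} {s : Multiset R} (hp : p ≠ 0)
    (hs : s.Nodup) (hdeg : p.natDegree ≤ Multiset.card s) (hroots : ∀ x ∈ s, p.IsRoot x) :
    C p.leadingCoeff * (s.map fun x => X - C x).prod = p := by
  have hle : s ≤ p.roots :=
    (Multiset.le_iff_subset hs).2 fun x hx => (mem_roots hp).2 (hroots x hx)
  have hcard : Multiset.card p.roots = p.natDegree :=
    le_antisymm (card_roots' p) (hdeg.trans (Multiset.card_le_card hle))
  rw [Multiset.eq_of_le_of_card_le hle (hcard.trans_le hdeg)]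
  exact C_leadingCoeff_mul_prod_multiset_X_sub_C hcard

theorem Polynomial.eval_eq_of_four_roots {R : Type*} [CommRing R] [IsDomain R] [LinearOrder R]
    {p : R[X]} (hp : p ≠ 0) (hdeg : p.natDegree ≤ 4)
    {y₁ y₂ y₃ y₄ : R} (h₁₂ : y₁ < y₂) (h₂₃ : y₂ < y₃) (h₃₄ : y₃ < y₄)
    (r₁ : p.IsRoot y₁) (r₂ : p.IsRoot y₂) (r₃ : p.IsRoot y₃) (r₄ : p.IsRoot y₄) (y : R) :
    p.eval y = p.leadingCoeff * ((y - y₁) * (y - y₂)) * ((y - y₃) * (y - y₄)) := by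
  have hs : ({y₁, y₂, y₃, y₄} : Multiset R).Nodup := by
    simp only [Multiset.insert_eq_cons, Multiset.nodup_cons, Multiset.mem_cons,
      Multiset.mem_singleton, Multiset.nodup_singleton, not_or]
    refine ⟨⟨?_, ?_, ?_⟩, ⟨?_, ?_⟩, ?_, trivial⟩ <;> apply ne_of_lt <;> order
  have hroots : ∀ x ∈ ({y₁, y₂, y₃, y₄} : Multiset R), p.IsRoot x := by
    simp only [Multiset.insert_eq_cons, Multiset.mem_cons, Multiset.mem_singleton]
    rintro x (rfl | rfl | rfl | rfl) <;> assumption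
  conv_lhs => rw [← C_leadingCoeff_mul_prod_multiset_X_sub_C_of_nodup hp hs hdeg hroots]
  simp only [Multiset.insert_eq_cons, Multiset.map_cons, Multiset.map_singleton,
    Multiset.prod_cons, Multiset.prod_singleton, eval_mul, eval_C, eval_sub, eval_X]
  ring

theorem Polynomial.sign_of_four_roots {𝕜 : Type*} [Field 𝕜] [LinearOrder 𝕜]
    [IsStrictOrderedRing 𝕜] {p : 𝕜[X]} (hdeg : p.natDegree ≤ 4)
    {t y₁ y₂ y₃ y₄ : 𝕜} (ht : t < y₁) (hpt : 0 < p.eval t)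
    (h₁₂ : y₁ < y₂) (h₂₃ : y₂ < y₃) (h₃₄ : y₃ < y₄)
    (r₁ : p.IsRoot y₁) (r₂ : p.IsRoot y₂) (r₃ : p.IsRoot y₃) (r₄ : p.IsRoot y₄) :
    (∀ y ∈ Ioo y₁ y₂ ∪ Ioo y₃ y₄, p.eval y < 0) ∧
      ∀ y ∈ Iio y₁ ∪ Ioo y₂ y₃ ∪ Ioi y₄, 0 < p.eval y := by
  have hp : p ≠ 0 := by rintro rfl; simp at hpt
  have heval := eval_eq_of_four_roots hp hdeg h₁₂ h₂₃ h₃₄ r₁ r₂ r₃ r₄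
  have hlc : 0 < p.leadingCoeff := by
    have h₁ : 0 < (t - y₁) * (t - y₂) := mul_pos_of_neg_of_neg (by linarith) (by linarith)
    have h₂ : 0 < (t - y₃) * (t - y₄) := mul_pos_of_neg_of_neg (by linarith) (by linarith)
    rw [heval] at hpt
    exact pos_of_mul_pos_left (pos_of_mul_pos_left hpt h₂.le) h₁.le
  refine ⟨fun y hy => ?_, fun y hy => ?_⟩
  · rw [heval]
    rcases hy with ⟨h₁, h₂⟩ | ⟨h₃, h₄⟩
    · exact mul_neg_of_neg_of_pos
        (mul_neg_of_pos_of_neg hlc (mul_neg_of_pos_of_neg (by linarith) (by linarith)))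
        (mul_pos_of_neg_of_neg (by linarith) (by linarith))
    · exact mul_neg_of_pos_of_neg
        (mul_pos hlc (mul_pos (by linarith) (by linarith)))
        (mul_neg_of_pos_of_neg (by linarith) (by linarith))
  · rw [heval]
    rcases hy with ((h₁ : y < y₁) | ⟨h₂, h₃⟩) | (h₄ : y₄ < y)
    · exact mul_pos (mul_pos hlc (mul_pos_of_neg_of_neg (by linarith) (by linarith)))
        (mul_pos_of_neg_of_neg (by linarith) (by linarith))
    · exact mul_pos (mul_pos hlc (mul_pos (by linarith) (by linarith)))
        (mul_pos_of_neg_of_neg (by linarith) (by linarith))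
    · exact mul_pos (mul_pos hlc (mul_pos (by linarith) (by linarith)))
        (mul_pos (by linarith) (by linarith))

theorem exists_zeros_of_pos_neg_pos {α δ : Type*} [ConditionallyCompleteLinearOrder α]
    [TopologicalSpace α] [OrderTopology α] [DenselyOrdered α] [LinearOrder δ]
    [TopologicalSpace δ] [OrderClosedTopology δ] [Zero δ] {f : α → δ} {u m v : α}
    (hf : ContinuousOn f (Icc u v)) (hum : u < m) (hmv : m < v)
    (hu : 0 < f u) (hm : f m < 0) (hv : 0 < f v) :
    (∃ r ∈ Ioo u m, f r = 0) ∧ ∃ r ∈ Ioo m v, f r = 0 :=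
  ⟨intermediate_value_Ioo' hum.le (hf.mono (Icc_subset_Icc_right hmv.le)) ⟨hm, hu⟩,
    intermediate_value_Ioo hmv.le (hf.mono (Icc_subset_Icc_left hum.le)) ⟨hm, hv⟩⟩

section Kernel

variable (l1 l2 a b : ℝ)

def bHat (y : ℝ) : ℝ := y * (l1 + l2 + l1 * l2 + a + b) - b - l2 * (1 + l1) * y ^ 2

def discY (y : ℝ) : ℝ := bHat l1 l2 a b y ^ 2 - 4 * (l1 * y * (l2 * (y - 1) - 1)) * (-a * y)

noncomputable def discPoly : ℝ[X] :=
  (X * C (l1 + l2 + l1 * l2 + a + b) - C b - C (l2 * (1 + l1)) * X ^ 2) ^ 2 -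
    4 * (C l1 * X * (C l2 * (X - 1) - 1)) * (-C a * X)

theorem eval_discPoly (y : ℝ) : (discPoly l1 l2 a b).eval y = discY l1 l2 a b y := by
  simp [discPoly, discY, bHat]

theorem isRoot_discPoly {y : ℝ} : (discPoly l1 l2 a b).IsRoot y ↔ discY l1 l2 a b y = 0 := by
  rw [IsRoot, eval_discPoly]

theorem natDegree_discPoly_le : (discPoly l1 l2 a b).natDegree ≤ 4 := by
  unfold discPoly
  compute_degree

theorem continuous_bHat : Continuous (bHat l1 l2 a b) := by
  unfold bHat
  fun_prop

theorem continuous_discY : Continuous (discY l1 l2 a b) := by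
  simpa only [eval_discPoly] using (discPoly l1 l2 a b).continuous

theorem discY_eq (y : ℝ) :
    discY l1 l2 a b y = bHat l1 l2 a b y ^ 2 - 4 * a * l1 * y ^ 2 * (1 + l2 - l2 * y) := by
  unfold discY
  ring

theorem bHat_zero : bHat l1 l2 a b 0 = -b := by
  simp [bHat]

theorem bHat_one : bHat l1 l2 a b 1 = l1 + a := by
  simp only [bHat]
  ring

theorem discY_zero : discY l1 l2 a b 0 = b ^ 2 := by
  simp [discY, bHat_zero]

theorem discY_one : discY l1 l2 a b 1 = (a - l1) ^ 2 := by
  rw [discY_eq, bHat_one]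
  ring

variable {l2}

theorem bHat_pole (hl2 : l2 ≠ 0) :
    bHat l1 l2 a b ((1 + l2) / l2) = (1 + l2) / l2 * (a + b - 1) - b := by
  simp only [bHat]
  field_simp
  ring

-- `(1 + l2) / l2` is the nonzero root of `â`, so `D_y = b̂²` there.
theorem discY_pole (hl2 : l2 ≠ 0) :
    discY l1 l2 a b ((1 + l2) / l2) = bHat l1 l2 a b ((1 + l2) / l2) ^ 2 := by
  rw [discY_eq]
  field_simp
  ring

variable {l1 a b}

theorem one_lt_pole (hl2 : 0 < l2) : 1 < (1 + l2) / l2 := by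
  rw [lt_div_iff₀ hl2]
  linarith

theorem bHat_pole_neg (hl2 : 0 < l2) (hb : 0 < b) (hab : a + b ≤ 1) :
    bHat l1 l2 a b ((1 + l2) / l2) < 0 := by
  rw [bHat_pole _ _ _ hl2.ne']
  linarith [mul_nonpos_of_nonneg_of_nonpos (by positivity : 0 ≤ (1 + l2) / l2)
    (by linarith : a + b - 1 ≤ 0)]

theorem exists_bHat_eq_zero (hl1 : 0 < l1) (hl2 : 0 < l2) (ha : 0 < a) (hb : 0 < b)
    (hab : a + b ≤ 1) :
    (∃ y ∈ Ioo 0 1, bHat l1 l2 a b y = 0) ∧ ∃ y ∈ Ioo 1 ((1 + l2) / l2), bHat l1 l2 a b y = 0 :=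
  ⟨intermediate_value_Ioo zero_le_one (continuous_bHat ..).continuousOn
      (by rw [bHat_zero, bHat_one]; constructor <;> linarith),
    intermediate_value_Ioo' (one_lt_pole hl2).le (continuous_bHat ..).continuousOn
      ⟨bHat_pole_neg hl2 hb hab, by rw [bHat_one]; linarith⟩⟩

theorem discY_pole_pos (hl2 : 0 < l2) (hb : 0 < b) (hab : a + b ≤ 1) :
    0 < discY l1 l2 a b ((1 + l2) / l2) := by
  rw [discY_pole _ _ _ hl2.ne']
  exact sq_pos_of_neg (bHat_pole_neg hl2 hb hab)

theorem discY_neg_of_bHat_eq_zero (hl1 : 0 < l1) (hl2 : 0 < l2) (ha : 0 < a) {y : ℝ}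
    (hy : 0 < y) (hy' : y < (1 + l2) / l2) (hroot : bHat l1 l2 a b y = 0) :
    discY l1 l2 a b y < 0 := by
  have hpos : 0 < 1 + l2 - l2 * y := by
    rw [lt_div_iff₀ hl2] at hy'
    linarith
  rw [discY_eq, hroot]
  linarith [mul_pos (by positivity : 0 < 4 * a * l1 * y ^ 2) hpos]

end Kernel

theorem branch_points_y_general (l1 l2 a b : ℝ)
    (hl1 : 0 < l1) (hl2 : 0 < l2) (ha : 0 < a) (hb : 0 < b)
    (hab : a + b ≤ 1) (hst1 : l1 < a) :
    ∃ y1 y2 y3 y4 : ℝ,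
      0 ≤ y1 ∧ y1 < y2 ∧ y2 ≤ 1 ∧ 1 < y3 ∧ y3 < y4 ∧ y4 < (1 + l2) / l2 ∧
      (∀ y : ℝ, y ∈ Set.Ioo y1 y2 ∪ Set.Ioo y3 y4 →
        (y * (l1 + l2 + l1 * l2 + a + b) - b - l2 * (1 + l1) * y ^ 2) ^ 2 -
          4 * (l1 * y * (l2 * (y - 1) - 1)) * (-a * y) < 0) ∧
      (∀ y : ℝ, y ∈ Set.Iio y1 ∪ Set.Ioo y2 y3 ∪ Set.Ioi y4 →
        0 < (y * (l1 + l2 + l1 * l2 + a + b) - b - l2 * (1 + l1) * y ^ 2) ^ 2 -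
          4 * (l1 * y * (l2 * (y - 1) - 1)) * (-a * y)) := by
  obtain ⟨⟨yc, hyc, hbc⟩, yd, hyd, hbd⟩ := exists_bHat_eq_zero hl1 hl2 ha hb hab
  have hD0 : 0 < discY l1 l2 a b 0 := by rw [discY_zero]; positivity
  have hD1 : 0 < discY l1 l2 a b 1 := by rw [discY_one]; exact pow_pos (sub_pos.2 hst1) 2
  obtain ⟨⟨y1, hy1, r1⟩, y2, hy2, r2⟩ := exists_zeros_of_pos_neg_pos
    (continuous_discY ..).continuousOn hyc.1 hyc.2 hD0
    (discY_neg_of_bHat_eq_zero hl1 hl2 ha hyc.1 (hyc.2.trans (one_lt_pole hl2)) hbc) hD1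
  obtain ⟨⟨y3, hy3, r3⟩, y4, hy4, r4⟩ := exists_zeros_of_pos_neg_pos
    (continuous_discY ..).continuousOn hyd.1 hyd.2 hD1
    (discY_neg_of_bHat_eq_zero hl1 hl2 ha (zero_lt_one.trans hyd.1) hyd.2 hbd)
    (discY_pole_pos hl2 hb hab)
  obtain ⟨hneg, hpos⟩ := sign_of_four_roots (natDegree_discPoly_le ..) hy1.1
    (by rwa [eval_discPoly]) (hy1.2.trans hy2.1) (hy2.2.trans hy3.1) (hy3.2.trans hy4.1)
    ((isRoot_discPoly ..).2 r1) ((isRoot_discPoly ..).2 r2) ((isRoot_discPoly ..).2 r3)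
    ((isRoot_discPoly ..).2 r4)
  refine ⟨y1, y2, y3, y4, hy1.1.le, hy1.2.trans hy2.1, hy2.2.le, hy3.1, hy3.2.trans hy4.1, hy4.2,
    fun y hy => ?_, fun y hy => ?_⟩
  · simpa only [eval_discPoly, discY, bHat] using hneg y hy
  · simpa only [eval_discPoly, discY, bHat] using hpos y hy

/-- Lemma 2, second part: the discriminant `D_y(y) = b̂(y)² − 4â(y)ĉ(y)` of the
kernel, viewed as a quadratic in `x`, has four real branch points
`0 ≤ y1 < y2 ≤ 1 < y3 < y4 < (1+λ2)/λ2`, is negative on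
`(y1,y2) ∪ (y3,y4)` and positive on `(−∞,y1) ∪ (y2,y3) ∪ (y4,∞)`. -/
theorem branch_points_y (l1 l2 a b : ℝ)
    (hl1 : 0 < l1) (hl2 : 0 < l2) (ha : 0 < a) (hb : 0 < b)
    (hab : a + b ≤ 1) (hst1 : l1 < a) (hst2 : l2 < b) :
    ∃ y1 y2 y3 y4 : ℝ,
      0 ≤ y1 ∧ y1 < y2 ∧ y2 ≤ 1 ∧ 1 < y3 ∧ y3 < y4 ∧ y4 < (1 + l2) / l2 ∧
      (∀ y : ℝ, y ∈ Set.Ioo y1 y2 ∪ Set.Ioo y3 y4 →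
        (y * (l1 + l2 + l1 * l2 + a + b) - b - l2 * (1 + l1) * y ^ 2) ^ 2 -
          4 * (l1 * y * (l2 * (y - 1) - 1)) * (-a * y) < 0) ∧
      (∀ y : ℝ, y ∈ Set.Iio y1 ∪ Set.Ioo y2 y3 ∪ Set.Ioi y4 →
        0 < (y * (l1 + l2 + l1 * l2 + a + b) - b - l2 * (1 + l1) * y ^ 2) ^ 2 -
          4 * (l1 * y * (l2 * (y - 1) - 1)) * (-a * y)) :=
  branch_points_y_general l1 l2 a b hl1 hl2 ha hb hab hst1
end

section
/- Let λ1 > 0, λ2 > 0, a > 0, b > 0 be real, let y be real with 0 < y < 1, and suppose D_y(y) := b̂(y)² − 4·â(y)·ĉ(y) < 0, where â(y) = λ1·y·(λ2(y−1) − 1), b̂(y) = y·(λ1+λ2+λ1λ2+a+b) − b − λ2(1+λ1)·y², ĉ(y) = −a·y. Then every complex root x of â(y)x² + b̂(y)x + ĉ(y) = 0 satisfies ‖x‖² = a/(λ1·(1+λ2−λ2·y)) and Re(x) = (y·(λ1+λ2+λ1λ2+a+b) − b − λ2(1+λ1)·y²)/(2·λ1·y·(1+λ2−λ2·y)). Moreover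 the map y ↦ a/(λ1·(1+λ2−λ2·y)) is strictly increasing on [0,1], so if in addition y ≤ y₂ for some y₂ ∈ (0,1], then ‖x‖² ≤ a/(λ1·(1+λ2−λ2·y₂)). -/
/-!
On the cut the kernel quadratic has real coefficients and negative discriminant, so its roots are
a non-real conjugate pair `x, x̄`. Comparing real and imaginary parts gives `2 Re x = -b̂/â` and
`|x|² = x x̄ = ĉ/â`; after cancelling the common factor `y` the latter is `a/(λ1(1+λ2−λ2 y))`,
which increases with `y` as long as the denominator stays positive. The negative discriminant
also forces `â(y) ≠ 0`, hence `y ≠ 0`, which is all the cancellation needs.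
-/

lemma ne_zero_of_discrim_neg {K : Type*} [CommRing K] [LinearOrder K] [IsStrictOrderedRing K]
    {A B C : K} (hD : discrim A B C < 0) : A ≠ 0 := by
  rintro rfl
  exact (sq_nonneg B).not_gt (by simpa [discrim] using hD)

namespace Complex

variable {A B C : ℝ} {x : ℂ}

lemma re_im_of_quadratic_eq_zero (h : (A : ℂ) * x ^ 2 + B * x + C = 0) :
    A * (x.re ^ 2 - x.im ^ 2) + B * x.re + C = 0 ∧ x.im * (2 * A * x.re + B) = 0 := by
  have hre := congrArg re h
  have him := congrArg im h
  simp only [pow_two, add_re, add_im, mul_re, mul_im, ofReal_re, ofReal_im, zero_re, zero_im]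
    at hre him
  exact ⟨by linear_combination hre, by linear_combination him⟩

lemma im_ne_zero_of_quadratic_eq_zero (hD : discrim A B C < 0)
    (h : (A : ℂ) * x ^ 2 + B * x + C = 0) : x.im ≠ 0 := by
  intro him
  refine quadratic_ne_zero_of_discrim_ne_sq (a := A) (b := B) (c := C)
    (fun s hs => (sq_nonneg s).not_gt (hs ▸ hD)) x.re ?_
  linear_combination (re_im_of_quadratic_eq_zero h).1 + A * x.im * him

lemma two_mul_re_of_quadratic_eq_zero (hD : discrim A B C < 0)
    (h : (A : ℂ) * x ^ 2 + B * x + C = 0) : 2 * A * x.re + B = 0 :=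
  (mul_eq_zero.mp (re_im_of_quadratic_eq_zero h).2).resolve_left
    (im_ne_zero_of_quadratic_eq_zero hD h)

lemma mul_normSq_of_quadratic_eq_zero (hD : discrim A B C < 0)
    (h : (A : ℂ) * x ^ 2 + B * x + C = 0) : A * normSq x = C := by
  rw [normSq_apply]
  linear_combination
    -(re_im_of_quadratic_eq_zero h).1 + x.re * two_mul_re_of_quadratic_eq_zero hD h

end Complex

lemma StrictAntiOn.const_div_of_pos {α K : Type*} [Preorder α] [Field K] [LinearOrder K]
    [IsStrictOrderedRing K] {f : α → K} {s : Set α} {a : K} (ha : 0 < a)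
    (hf : StrictAntiOn f s) (hpos : ∀ t ∈ s, 0 < f t) : StrictMonoOn (fun t => a / f t) s :=
  fun _ hu _ hv huv => div_lt_div_of_pos_left ha (hpos _ hv) (hf hu hv huv)

theorem contour_M_general (l1 l2 a b : ℝ)
    (hl1 : 0 < l1) (hl2 : 0 < l2) (ha : 0 < a)
    (y : ℝ)
    (hD : (y * (l1 + l2 + l1 * l2 + a + b) - b - l2 * (1 + l1) * y ^ 2) ^ 2 -
        4 * (l1 * y * (l2 * (y - 1) - 1)) * (-a * y) < 0) :
    (∀ x : ℂ,
      ((l1 * y * (l2 * (y - 1) - 1) : ℝ) : ℂ) * x ^ 2 +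
        ((y * (l1 + l2 + l1 * l2 + a + b) - b - l2 * (1 + l1) * y ^ 2 : ℝ) : ℂ) * x +
        ((-a * y : ℝ) : ℂ) = 0 →
      ‖x‖ ^ 2 = a / (l1 * (1 + l2 - l2 * y)) ∧
      x.re = (y * (l1 + l2 + l1 * l2 + a + b) - b - l2 * (1 + l1) * y ^ 2) /
        (2 * l1 * y * (1 + l2 - l2 * y))) ∧
    StrictMonoOn (fun t : ℝ => a / (l1 * (1 + l2 - l2 * t))) (Set.Icc 0 1) ∧
    (∀ y2 : ℝ, y2 ∈ Set.Ioc (0 : ℝ) 1 → y ≤ y2 →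
      ∀ x : ℂ,
        ((l1 * y * (l2 * (y - 1) - 1) : ℝ) : ℂ) * x ^ 2 +
          ((y * (l1 + l2 + l1 * l2 + a + b) - b - l2 * (1 + l1) * y ^ 2 : ℝ) : ℂ) * x +
          ((-a * y : ℝ) : ℂ) = 0 →
        ‖x‖ ^ 2 ≤ a / (l1 * (1 + l2 - l2 * y2))) := by
  set B := y * (l1 + l2 + l1 * l2 + a + b) - b - l2 * (1 + l1) * y ^ 2
  have hA : l1 * y * (l2 * (y - 1) - 1) ≠ 0 := ne_zero_of_discrim_neg hD
  have hy : y ≠ 0 := by rintro rfl; simp at hA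
  have hden : l1 * (1 + l2 - l2 * y) ≠ 0 := fun h => hA (by linear_combination -y * h)
  have hnorm : ∀ x : ℂ, ((l1 * y * (l2 * (y - 1) - 1) : ℝ) : ℂ) * x ^ 2 + (B : ℂ) * x +
      ((-a * y : ℝ) : ℂ) = 0 → ‖x‖ ^ 2 = a / (l1 * (1 + l2 - l2 * y)) := fun x hx => by
    rw [Complex.sq_norm, eq_div_iff hden]
    exact mul_left_cancel₀ hy
      (by linear_combination -(Complex.mul_normSq_of_quadratic_eq_zero hD hx))
  have hmono : StrictMonoOn (fun t : ℝ => a / (l1 * (1 + l2 - l2 * t))) (Set.Iic 1) :=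
    StrictAntiOn.const_div_of_pos ha (fun _ _ _ _ huv => by nlinarith [mul_pos hl1 hl2])
      fun t ht => mul_pos hl1 (by nlinarith [Set.mem_Iic.mp ht])
  refine ⟨fun x hx => ⟨hnorm x hx, ?_⟩, hmono.mono Set.Icc_subset_Iic_self,
    fun y2 hy2 hle x hx => hnorm x hx ▸ hmono.monotoneOn (hle.trans hy2.2) hy2.2 hle⟩
  rw [eq_div_iff fun h => hA (by linear_combination -h / 2)]
  linear_combination -(Complex.two_mul_re_of_quadratic_eq_zero hD hx)

/-- Lemma 3, part 1: for `y` in the branch cut (where `D_y(y) < 0`), the complex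
roots `x` of the kernel quadratic satisfy `‖x‖² = a/(λ1(1+λ2−λ2 y))` and the
stated formula for `Re(x)`; moreover `y ↦ a/(λ1(1+λ2−λ2 y))` is strictly
increasing on `[0,1]`, hence `‖x‖² ≤ a/(λ1(1+λ2−λ2 y₂))` whenever `y ≤ y₂`. -/
theorem contour_M (l1 l2 a b : ℝ)
    (hl1 : 0 < l1) (hl2 : 0 < l2) (ha : 0 < a) (hb : 0 < b)
    (y : ℝ) (hy0 : 0 < y) (hy1 : y < 1)
    (hD : (y * (l1 + l2 + l1 * l2 + a + b) - b - l2 * (1 + l1) * y ^ 2) ^ 2 -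
        4 * (l1 * y * (l2 * (y - 1) - 1)) * (-a * y) < 0) :
    (∀ x : ℂ,
      ((l1 * y * (l2 * (y - 1) - 1) : ℝ) : ℂ) * x ^ 2 +
        ((y * (l1 + l2 + l1 * l2 + a + b) - b - l2 * (1 + l1) * y ^ 2 : ℝ) : ℂ) * x +
        ((-a * y : ℝ) : ℂ) = 0 →
      ‖x‖ ^ 2 = a / (l1 * (1 + l2 - l2 * y)) ∧
      x.re = (y * (l1 + l2 + l1 * l2 + a + b) - b - l2 * (1 + l1) * y ^ 2) /
        (2 * l1 * y * (1 + l2 - l2 * y))) ∧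
    StrictMonoOn (fun t : ℝ => a / (l1 * (1 + l2 - l2 * t))) (Set.Icc 0 1) ∧
    (∀ y2 : ℝ, y2 ∈ Set.Ioc (0 : ℝ) 1 → y ≤ y2 →
      ∀ x : ℂ,
        ((l1 * y * (l2 * (y - 1) - 1) : ℝ) : ℂ) * x ^ 2 +
          ((y * (l1 + l2 + l1 * l2 + a + b) - b - l2 * (1 + l1) * y ^ 2 : ℝ) : ℂ) * x +
          ((-a * y : ℝ) : ℂ) = 0 →
        ‖x‖ ^ 2 ≤ a / (l1 * (1 + l2 - l2 * y2))) :=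
  contour_M_general l1 l2 a b hl1 hl2 ha y hD
end

section
/- Let λ1 > 0, λ2 > 0, a > 0, b > 0 be real, let x be real with 0 < x < 1, and suppose D_x(x) := b(x)² − 4·a(x)·c(x) < 0, where a(x) = λ2·x·(λ1(x−1) − 1), b(x) = x·(λ1+λ2+λ1λ2+a+b) − a − λ1(1+λ2)·x², c(x) = −b·x. Then every complex root y of a(x)y² + b(x)y + c(x) = 0 satisfies ‖y‖² = b/(λ2·(1+λ1−λ1·x)) and Re(y) = (x·(λ1+λ2+λ1λ2+a+b) − a − λ1(1+λ2)·x²)/(2·λ2·x·(1+λ1−λ1·x)). Moreover the map x ↦ b/(λ2·(1+λ1−λ1·x)) is strictly increasing on [0,1], so if in addition x ≤ x₂ for some x₂ ∈ (0,1], then ‖y‖² ≤ b/(λ2·(1+λ1−λ1·x₂)). -/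
/-!
A real quadratic with negative discriminant has a conjugate pair of non-real roots `y, ȳ`, so
Vieta's formulas give `2 Re y = -B/A` and `|y|² = y ȳ = C/A`. For the kernel the leading
coefficient factors as `A = -x·λ2(1 + λ1 - λ1 x)`, which turns these into the stated formulas.
-/

open ComplexConjugate

namespace Complex

theorem quadratic_conj_eq_zero {A B C : ℝ} {y : ℂ}
    (h : (A : ℂ) * y ^ 2 + B * y + C = 0) : (A : ℂ) * conj y ^ 2 + B * conj y + C = 0 := by
  simpa using congrArg conj h

theorem conj_ne_of_quadratic_eq_zero {A B C : ℝ} (hD : discrim A B C < 0) {y : ℂ}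
    (h : (A : ℂ) * y ^ 2 + B * y + C = 0) : conj y ≠ y := by
  intro hy
  obtain ⟨r, rfl⟩ : ∃ r : ℝ, y = r := ⟨y.re, (conj_eq_iff_re.mp hy).symm⟩
  refine quadratic_ne_zero_of_discrim_ne_sq (fun s hs => (sq_nonneg s).not_gt (hs ▸ hD)) r ?_
  rw [← sq]
  exact_mod_cast h

theorem re_eq_and_normSq_eq_of_quadratic_eq_zero {A B C : ℝ} (hA : A ≠ 0)
    (hD : discrim A B C < 0) {y : ℂ} (h : (A : ℂ) * y ^ 2 + B * y + C = 0) :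
    y.re = -B / (2 * A) ∧ normSq y = C / A := by
  have hconj := quadratic_conj_eq_zero h
  have hsub : y - conj y ≠ 0 := sub_ne_zero.mpr (conj_ne_of_quadratic_eq_zero hD h).symm
  have hsum : (A : ℂ) * (y + conj y) + B = 0 :=
    (mul_eq_zero.mp (by linear_combination h - hconj :
      (y - conj y) * ((A : ℂ) * (y + conj y) + B) = 0)).resolve_left hsub
  have hprod : (A : ℂ) * (y * conj y) = C := by linear_combination y * hsum - h
  rw [add_conj] at hsum
  rw [mul_conj] at hprod
  constructor
  · field_simp
    linarith [show A * (2 * y.re) + B = 0 by exact_mod_cast hsum]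
  · rw [eq_div_iff hA, mul_comm]
    exact_mod_cast hprod

end Complex

theorem mul_one_add_sub_mul_pos {l1 l2 t : ℝ} (hl1 : 0 ≤ l1) (hl2 : 0 < l2) (ht : t ≤ 1) :
    0 < l2 * (1 + l1 - l1 * t) :=
  mul_pos hl2 (by nlinarith)

theorem strictMonoOn_div_mul_one_add_sub_mul {l1 l2 b : ℝ} (hl1 : 0 < l1) (hl2 : 0 < l2)
    (hb : 0 < b) : StrictMonoOn (fun t : ℝ => b / (l2 * (1 + l1 - l1 * t))) (Set.Iic 1) :=
  fun _ _ _ ht hst => div_lt_div_of_pos_left hb (mul_one_add_sub_mul_pos hl1.le hl2 ht)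
    (by nlinarith [mul_pos hl2 hl1])

theorem contour_L_general (l1 l2 a b : ℝ)
    (hl1 : 0 < l1) (hl2 : 0 < l2) (hb : 0 < b)
    (x : ℝ) (hx0 : 0 < x) (hx1 : x < 1)
    (hD : (x * (l1 + l2 + l1 * l2 + a + b) - a - l1 * (1 + l2) * x ^ 2) ^ 2 -
        4 * (l2 * x * (l1 * (x - 1) - 1)) * (-b * x) < 0) :
    (∀ y : ℂ,
      ((l2 * x * (l1 * (x - 1) - 1) : ℝ) : ℂ) * y ^ 2 +
        ((x * (l1 + l2 + l1 * l2 + a + b) - a - l1 * (1 + l2) * x ^ 2 : ℝ) : ℂ) * y +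
        ((-b * x : ℝ) : ℂ) = 0 →
      ‖y‖ ^ 2 = b / (l2 * (1 + l1 - l1 * x)) ∧
      y.re = (x * (l1 + l2 + l1 * l2 + a + b) - a - l1 * (1 + l2) * x ^ 2) /
        (2 * l2 * x * (1 + l1 - l1 * x))) ∧
    StrictMonoOn (fun t : ℝ => b / (l2 * (1 + l1 - l1 * t))) (Set.Icc 0 1) ∧
    (∀ x2 : ℝ, x2 ∈ Set.Ioc (0 : ℝ) 1 → x ≤ x2 →
      ∀ y : ℂ,
        ((l2 * x * (l1 * (x - 1) - 1) : ℝ) : ℂ) * y ^ 2 +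
          ((x * (l1 + l2 + l1 * l2 + a + b) - a - l1 * (1 + l2) * x ^ 2 : ℝ) : ℂ) * y +
          ((-b * x : ℝ) : ℂ) = 0 →
        ‖y‖ ^ 2 ≤ b / (l2 * (1 + l1 - l1 * x2))) := by
  have hden := mul_one_add_sub_mul_pos hl1.le hl2 hx1.le
  have hA : l2 * x * (l1 * (x - 1) - 1) = -(x * (l2 * (1 + l1 - l1 * x))) := by ring
  have hA0 : l2 * x * (l1 * (x - 1) - 1) ≠ 0 := by
    rw [hA]
    exact neg_ne_zero.mpr (mul_pos hx0 hden).ne'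
  have hmono := strictMonoOn_div_mul_one_add_sub_mul hl1 hl2 hb
  have roots : ∀ y : ℂ,
      ((l2 * x * (l1 * (x - 1) - 1) : ℝ) : ℂ) * y ^ 2 +
        ((x * (l1 + l2 + l1 * l2 + a + b) - a - l1 * (1 + l2) * x ^ 2 : ℝ) : ℂ) * y +
        ((-b * x : ℝ) : ℂ) = 0 →
      ‖y‖ ^ 2 = b / (l2 * (1 + l1 - l1 * x)) ∧
      y.re = (x * (l1 + l2 + l1 * l2 + a + b) - a - l1 * (1 + l2) * x ^ 2) /
        (2 * l2 * x * (1 + l1 - l1 * x)) := by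
    intro y hy
    obtain ⟨hre, hnormSq⟩ := Complex.re_eq_and_normSq_eq_of_quadratic_eq_zero hA0 hD hy
    rw [Complex.sq_norm, hnormSq, hre, hA]
    constructor <;> field_simp
  refine ⟨roots, hmono.mono fun t ht => ht.2, fun x2 hx2 hle y hy => ?_⟩
  rw [(roots y hy).1]
  exact hmono.monotoneOn hx1.le hx2.2 hle

/-- Lemma 3, part 2: for `x` in the branch cut (where `D_x(x) < 0`), the complex
roots `y` of the kernel quadratic satisfy `‖y‖² = b/(λ2(1+λ1−λ1 x))` and the
stated formula for `Re(y)`; moreover `x ↦ b/(λ2(1+λ1−λ1 x))` is strictly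
increasing on `[0,1]`, hence `‖y‖² ≤ b/(λ2(1+λ1−λ1 x₂))` whenever `x ≤ x₂`. -/
theorem contour_L (l1 l2 a b : ℝ)
    (hl1 : 0 < l1) (hl2 : 0 < l2) (ha : 0 < a) (hb : 0 < b)
    (x : ℝ) (hx0 : 0 < x) (hx1 : x < 1)
    (hD : (x * (l1 + l2 + l1 * l2 + a + b) - a - l1 * (1 + l2) * x ^ 2) ^ 2 -
        4 * (l2 * x * (l1 * (x - 1) - 1)) * (-b * x) < 0) :
    (∀ y : ℂ,
      ((l2 * x * (l1 * (x - 1) - 1) : ℝ) : ℂ) * y ^ 2 +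
        ((x * (l1 + l2 + l1 * l2 + a + b) - a - l1 * (1 + l2) * x ^ 2 : ℝ) : ℂ) * y +
        ((-b * x : ℝ) : ℂ) = 0 →
      ‖y‖ ^ 2 = b / (l2 * (1 + l1 - l1 * x)) ∧
      y.re = (x * (l1 + l2 + l1 * l2 + a + b) - a - l1 * (1 + l2) * x ^ 2) /
        (2 * l2 * x * (1 + l1 - l1 * x))) ∧
    StrictMonoOn (fun t : ℝ => b / (l2 * (1 + l1 - l1 * t))) (Set.Icc 0 1) ∧
    (∀ x2 : ℝ, x2 ∈ Set.Ioc (0 : ℝ) 1 → x ≤ x2 →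
      ∀ y : ℂ,
        ((l2 * x * (l1 * (x - 1) - 1) : ℝ) : ℂ) * y ^ 2 +
          ((x * (l1 + l2 + l1 * l2 + a + b) - a - l1 * (1 + l2) * x ^ 2 : ℝ) : ℂ) * y +
          ((-b * x : ℝ) : ℂ) = 0 →
        ‖y‖ ^ 2 ≤ b / (l2 * (1 + l1 - l1 * x2))) :=
  contour_L_general l1 l2 a b hl1 hl2 hb x hx0 hx1 hD
end

section
/- Consider the symmetric two-user capture model with p = 1. Let p̃ ∈ (0,1], α* ∈ (0,1], b ∈ [0,1), λ > 0 be real, define g(α) := α·(1 + α·(b−1)) and f(α) := ((2+λ)·(α + α²·(b−1)) + λ·α*·p̃)/(2·α*·p̃·(g(α) − λ)) for α with g(α) > λ, and set α̃ := α* if b ≥ (2α* − 1)/(2α*), and α̃ := 1/(2(1−b)) if b < (2α* − 1)/(2α*). If there exists α ∈ [0, α*] with g(α) > λ, then α̃ ∈ [0, α*], g(α̃) > λ, and f(α̃) ≤ f(α) for every α ∈ [0, α*] with g(α) > λ. -/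
/-!
The delay is a function of the service rate alone: `f α = D (g α)` with
`D s = ((2 + λ) s + λ α* p̃) / (2 α* p̃ (s - λ))`, which decreases on `s > λ`. So minimising
the delay means maximising the concave parabola `g α = α (1 - (1 - b) α)` over `[0, α*]`, whose
vertex is `1 / (2 (1 - b))`; the threshold on `b` says exactly that `α*` lies left of the vertex,
so `α̃ = min α* (1 / (2 (1 - b)))`.
-/

open Set

lemma mul_one_sub_mul_le_of_add_le {c x y : ℝ} (hxy : x ≤ y) (hsum : c * (x + y) ≤ 1) :
    x * (1 - c * x) ≤ y * (1 - c * y) := by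
  nlinarith [mul_nonneg (sub_nonneg.2 hxy) (sub_nonneg.2 hsum)]

lemma mul_one_sub_mul_le_inv_four {c : ℝ} (hc : 0 < c) (x : ℝ) :
    x * (1 - c * x) ≤ 1 / (4 * c) := by
  rw [le_div_iff₀ (by positivity)]
  nlinarith [sq_nonneg (1 - 2 * c * x)]

lemma min_inv_two_mul_mem_Icc {a c : ℝ} (ha : 0 ≤ a) (hc : 0 ≤ c) :
    min a (1 / (2 * c)) ∈ Icc 0 a :=
  ⟨le_min ha (by positivity), min_le_left _ _⟩

lemma isMaxOn_mul_one_sub_mul {a c : ℝ} (hc : 0 < c) :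
    IsMaxOn (fun x => x * (1 - c * x)) (Icc 0 a) (min a (1 / (2 * c))) := by
  intro x ⟨_, hxa⟩
  change x * (1 - c * x) ≤ _
  rcases le_total a (1 / (2 * c)) with hle | hle
  · rw [min_eq_left hle]
    refine mul_one_sub_mul_le_of_add_le hxa ?_
    rw [le_div_iff₀ (by positivity)] at hle
    nlinarith
  · rw [min_eq_right hle]
    have hpeak : 1 / (2 * c) * (1 - c * (1 / (2 * c))) = 1 / (4 * c) := by
      field_simp; ring
    simpa only [hpeak] using mul_one_sub_mul_le_inv_four hc x

lemma two_mul_sub_one_div_le_iff {a b : ℝ} (ha : 0 < a) (hb : b < 1) :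
    (2 * a - 1) / (2 * a) ≤ b ↔ a ≤ 1 / (2 * (1 - b)) := by
  rw [div_le_iff₀ (by positivity), le_div_iff₀ (by linarith)]
  constructor <;> intro h <;> linarith

lemma antitoneOn_add_div_mul_sub {A K C lam : ℝ} (hC : 0 < C) (hK : 0 ≤ A * lam + K) :
    AntitoneOn (fun s => (A * s + K) / (C * (s - lam))) (Ioi lam) := by
  intro s hs t ht hst
  have hs' : 0 < C * (s - lam) := mul_pos hC (sub_pos.2 hs)
  have ht' : 0 < C * (t - lam) := mul_pos hC (sub_pos.2 ht)
  simp only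
  rw [div_le_div_iff₀ ht' hs']
  nlinarith [mul_nonneg (mul_nonneg hC.le (sub_nonneg.2 hst)) hK]

theorem optimal_transmission_probability_general (pt αs b lam : ℝ)
    (hpt0 : 0 < pt) (hαs0 : 0 < αs)
    (hb1 : b < 1) (hlam : 0 < lam) :
    let g : ℝ → ℝ := fun α => α * (1 + α * (b - 1))
    let f : ℝ → ℝ := fun α =>
      ((2 + lam) * (α + α ^ 2 * (b - 1)) + lam * αs * pt) /
        (2 * αs * pt * (g α - lam))
    let αt : ℝ := if b ≥ (2 * αs - 1) / (2 * αs) then αs else 1 / (2 * (1 - b))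
    (∃ α ∈ Set.Icc (0 : ℝ) αs, lam < g α) →
      αt ∈ Set.Icc (0 : ℝ) αs ∧ lam < g αt ∧
        ∀ α ∈ Set.Icc (0 : ℝ) αs, lam < g α → f αt ≤ f α := by
  intro g f αt ⟨α₀, hα₀, hgα₀⟩
  have hc : 0 < 1 - b := sub_pos.2 hb1
  have hαt : αt = min αs (1 / (2 * (1 - b))) := by
    simp only [αt, ge_iff_le, two_mul_sub_one_div_le_iff hαs0 hb1, min_def]
  have hg : g = fun x => x * (1 - (1 - b) * x) := by funext x; simp only [g]; ring
  have hmax : IsMaxOn g (Icc 0 αs) αt := hαt ▸ hg ▸ isMaxOn_mul_one_sub_mul hc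
  have hf : ∀ x, f x = ((2 + lam) * g x + lam * αs * pt) / (2 * αs * pt * (g x - lam)) := by
    intro x; simp only [f, g]; ring_nf
  have hgαt : lam < g αt := hgα₀.trans_le (hmax hα₀)
  refine ⟨hαt ▸ min_inv_two_mul_mem_Icc hαs0.le hc.le, hgαt, fun α hα hgα => ?_⟩
  rw [hf, hf]
  exact antitoneOn_add_div_mul_sub (by positivity) (by positivity) hgα hgαt (hmax hα)

/-- Lemma 6: the delay-optimal transmission probability for the symmetric
two-user capture model with `p = 1` is `α̃ = α*` if `b ≥ (2α*−1)/(2α*)`, and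
`α̃ = 1/(2(1−b))` otherwise. -/
theorem optimal_transmission_probability (pt αs b lam : ℝ)
    (hpt0 : 0 < pt) (hpt1 : pt ≤ 1) (hαs0 : 0 < αs) (hαs1 : αs ≤ 1)
    (hb0 : 0 ≤ b) (hb1 : b < 1) (hlam : 0 < lam) :
    let g : ℝ → ℝ := fun α => α * (1 + α * (b - 1))
    let f : ℝ → ℝ := fun α =>
      ((2 + lam) * (α + α ^ 2 * (b - 1)) + lam * αs * pt) /
        (2 * αs * pt * (g α - lam))
    let αt : ℝ := if b ≥ (2 * αs - 1) / (2 * αs) then αs else 1 / (2 * (1 - b))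
    (∃ α ∈ Set.Icc (0 : ℝ) αs, lam < g α) →
      αt ∈ Set.Icc (0 : ℝ) αs ∧ lam < g αt ∧
        ∀ α ∈ Set.Icc (0 : ℝ) αs, lam < g α → f αt ≤ f α :=
  optimal_transmission_probability_general pt αs b lam hpt0 hαs0 hb1 hlam
end

section
/- Let b, A1, λ1, λ2, d1 be real with b > 0, A1 > 0, λ1 > 0, λ2 > 0, d1 < 0, and λ1 < A1 + d1·λ2/b. Define Z(x) := −λ1·(b + (1+λ2)·d1)·x² + ((λ1+λ2+λ1·λ2)·d1 + (b + d1)·A1)·x − A1·d1. Then Z(0) = −A1·d1 > 0 and Z(1) = b·A1 − λ1·b + λ2·d1 > 0. Moreover, if in addition b + (1+λ2)·d1 > 0, then there exist real numbers x⁻ < 0 and x⁺ > 1 with Z(x⁻) = 0 and Z(x⁺) = 0, i.e., Z has two real roots of opposite sign, the positive one lying strictly to the right of 1. -/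
/-!
`Z` is a downward-opening parabola once `b + (1 + λ2) d1 > 0`, and it is positive at `0` and `1`
(the latter is the stability condition multiplied by `b`). A continuous function that is positive
at a point and tends to `-∞` has a zero on the corresponding side of that point, so `Z` has a zero
to the left of `0` and one to the right of `1`.
-/

open Filter

theorem exists_gt_eq_zero_of_tendsto_atBot {f : ℝ → ℝ} (hf : Continuous f)
    (hlim : Tendsto f atTop atBot) {p : ℝ} (hp : 0 < f p) : ∃ x, p < x ∧ f x = 0 := by
  obtain ⟨q, hfq, hpq⟩ :=
    ((hlim.eventually (eventually_lt_atBot 0)).and (eventually_gt_atTop p)).exists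
  obtain ⟨x, hx, hfx⟩ :=
    intermediate_value_Ioc' hpq.le hf.continuousOn (Set.mem_Ico.2 ⟨hfq.le, hp⟩)
  exact ⟨x, hx.1, hfx⟩

theorem tendsto_neg_quadratic_atTop_atBot {a : ℝ} (β c : ℝ) (ha : 0 < a) :
    Tendsto (fun x : ℝ => -a * x ^ 2 + β * x + c) atTop atBot := by
  have h : Tendsto (fun x : ℝ => x * (-a * x + β)) atTop atBot :=
    tendsto_id.atTop_mul_atBot₀ (tendsto_atBot_add_const_right _ β
      (tendsto_id.const_mul_atTop_of_neg (neg_neg_of_pos ha)))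
  refine tendsto_atBot_add_const_right _ c (h.congr fun x => ?_)
  ring

theorem exists_gt_neg_quadratic_eq_zero {a β c p : ℝ} (ha : 0 < a)
    (hp : 0 < -a * p ^ 2 + β * p + c) : ∃ x, p < x ∧ -a * x ^ 2 + β * x + c = 0 :=
  exists_gt_eq_zero_of_tendsto_atBot (by fun_prop) (tendsto_neg_quadratic_atTop_atBot β c ha) hp

theorem resultant_Z_roots_general (b A1 l1 l2 d1 : ℝ)
    (hb : 0 < b) (hA1 : 0 < A1) (hl1 : 0 < l1)
    (hd1 : d1 < 0) (hstab : l1 < A1 + d1 * l2 / b) :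
    let Z : ℝ → ℝ := fun x =>
      -l1 * (b + (1 + l2) * d1) * x ^ 2 +
        ((l1 + l2 + l1 * l2) * d1 + (b + d1) * A1) * x - A1 * d1
    Z 0 = -A1 * d1 ∧ 0 < Z 0 ∧
      Z 1 = b * A1 - l1 * b + l2 * d1 ∧ 0 < Z 1 ∧
      (0 < b + (1 + l2) * d1 →
        ∃ xm xp : ℝ, xm < 0 ∧ 1 < xp ∧ Z xm = 0 ∧ Z xp = 0) := by
  intro Z
  set β := (l1 + l2 + l1 * l2) * d1 + (b + d1) * A1
  have hstab' : l1 * b < b * A1 + l2 * d1 := by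
    have h := mul_lt_mul_of_pos_right hstab hb
    rw [add_mul, div_mul_cancel₀ _ hb.ne'] at h
    linarith
  have hZ0 : Z 0 = -A1 * d1 := by simp [Z]
  have hZ1 : Z 1 = b * A1 - l1 * b + l2 * d1 := by simp only [Z]; ring
  have hZ0_pos : 0 < Z 0 := by rw [hZ0]; exact mul_pos_of_neg_of_neg (neg_neg_of_pos hA1) hd1
  have hZ1_pos : 0 < Z 1 := by rw [hZ1]; linarith
  refine ⟨hZ0, hZ0_pos, hZ1, hZ1_pos, fun hpos => ?_⟩
  have ha : 0 < l1 * (b + (1 + l2) * d1) := mul_pos hl1 hpos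
  have hZ : ∀ x, Z x = -(l1 * (b + (1 + l2) * d1)) * x ^ 2 + β * x + -A1 * d1 := fun x => by
    simp only [Z]; ring
  -- the negative root of `Z` is minus a positive root of `x ↦ Z (-x)`
  obtain ⟨xm, hxm, hZxm⟩ :=
    exists_gt_neg_quadratic_eq_zero (β := -β) (c := -A1 * d1) (p := 0) ha
      (by rw [hZ] at hZ0_pos; simpa using hZ0_pos)
  obtain ⟨xp, hxp, hZxp⟩ := exists_gt_neg_quadratic_eq_zero ha (hZ 1 ▸ hZ1_pos)
  refine ⟨-xm, xp, neg_neg_of_pos hxm, hxp, ?_, hZ xp ▸ hZxp⟩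
  rw [hZ, ← hZxm]
  ring

/-- Appendix: positivity of the resultant polynomial `Z` at `0` and `1`, and
location of its two real roots of opposite sign when `b + (1+λ2)d1 > 0`. -/
theorem resultant_Z_roots (b A1 l1 l2 d1 : ℝ)
    (hb : 0 < b) (hA1 : 0 < A1) (hl1 : 0 < l1) (hl2 : 0 < l2)
    (hd1 : d1 < 0) (hstab : l1 < A1 + d1 * l2 / b) :
    let Z : ℝ → ℝ := fun x =>
      -l1 * (b + (1 + l2) * d1) * x ^ 2 +
        ((l1 + l2 + l1 * l2) * d1 + (b + d1) * A1) * x - A1 * d1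
    Z 0 = -A1 * d1 ∧ 0 < Z 0 ∧
      Z 1 = b * A1 - l1 * b + l2 * d1 ∧ 0 < Z 1 ∧
      (0 < b + (1 + l2) * d1 →
        ∃ xm xp : ℝ, xm < 0 ∧ 1 < xp ∧ Z xm = 0 ∧ Z xp = 0) :=
  resultant_Z_roots_general b A1 l1 l2 d1 hb hA1 hl1 hd1 hstab
end

section
/- Let a, A2, λ1, λ2, d2 be real with a > 0, A2 > 0, λ1 > 0, λ2 > 0, d2 < 0, and λ2 < A2 + d2·λ1/a. Define S(y) := −λ2·(a + (1+λ1)·d2)·y² + ((λ1+λ2+λ1·λ2)·d2 + A2·(d2 + a))·y − A2·d2. Then S(0) = −A2·d2 > 0 and S(1) = a·A2 − λ2·a + λ1·d2 > 0. Moreover, if in addition a + (1+λ1)·d2 > 0, then there exist real numbers y⁻ < 0 and y⁺ > 1 with S(y⁻) = 0 and S(y⁺) = 0. -/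
/- The discriminant is `(2 C x₀ + B)² - 4 C f(x₀) > (2 C x₀ + B)²`, which puts the two roots
`(-B ± √Δ) / (2 C)` on opposite sides of `x₀`. -/
theorem exists_quadratic_roots_around {C B E x₀ : ℝ} (hC : C < 0)
    (hx₀ : 0 < C * x₀ ^ 2 + B * x₀ + E) :
    ∃ r₁ r₂ : ℝ, r₁ < x₀ ∧ x₀ < r₂ ∧
      C * r₁ ^ 2 + B * r₁ + E = 0 ∧ C * r₂ ^ 2 + B * r₂ + E = 0 := by
  have hdisc : (2 * C * x₀ + B) ^ 2 < discrim C B E := by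
    rw [discrim]; nlinarith
  set s := √(discrim C B E)
  have hs : discrim C B E = s * s :=
    (Real.mul_self_sqrt ((sq_nonneg _).trans hdisc.le)).symm
  have hlt : |2 * C * x₀ + B| < s :=
    abs_lt_of_sq_lt_sq (by rwa [sq s, ← hs]) (Real.sqrt_nonneg _)
  have hroot (r : ℝ) (hr : r = (-B + s) / (2 * C) ∨ r = (-B - s) / (2 * C)) :
      C * r ^ 2 + B * r + E = 0 := by
    rw [sq, quadratic_eq_zero_iff hC.ne hs r]
    exact hr
  have h2C : 2 * C < 0 := by linarith
  obtain ⟨hlo, hhi⟩ := abs_lt.mp hlt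
  refine ⟨(-B + s) / (2 * C), (-B - s) / (2 * C), ?_, ?_, hroot _ (.inl rfl), hroot _ (.inr rfl)⟩
  · rw [div_lt_iff_of_neg h2C]; linarith
  · rw [lt_div_iff_of_neg h2C]; linarith

theorem polynomial_S_roots_general (a A2 l1 l2 d2 : ℝ)
    (ha : 0 < a) (hA2 : 0 < A2) (hl2 : 0 < l2)
    (hd2 : d2 < 0) (hstab : l2 < A2 + d2 * l1 / a) :
    let S : ℝ → ℝ := fun y =>
      -l2 * (a + (1 + l1) * d2) * y ^ 2 +
        ((l1 + l2 + l1 * l2) * d2 + A2 * (d2 + a)) * y - A2 * d2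
    S 0 = -A2 * d2 ∧ 0 < S 0 ∧
      S 1 = a * A2 - l2 * a + l1 * d2 ∧ 0 < S 1 ∧
      (0 < a + (1 + l1) * d2 →
        ∃ ym yp : ℝ, ym < 0 ∧ 1 < yp ∧ S ym = 0 ∧ S yp = 0) := by
  intro S
  have hS (y : ℝ) : S y = -l2 * (a + (1 + l1) * d2) * y ^ 2 +
      ((l1 + l2 + l1 * l2) * d2 + A2 * (d2 + a)) * y + -(A2 * d2) := by
    simp only [S]; ring
  have hS0 : S 0 = -A2 * d2 := by rw [hS]; ring
  have hS1 : S 1 = a * A2 - l2 * a + l1 * d2 := by rw [hS]; ring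
  have hS0_pos : 0 < S 0 := by rw [hS0]; nlinarith
  have hS1_pos : 0 < S 1 := by
    have h := mul_lt_mul_of_pos_right hstab ha
    rw [add_mul, div_mul_cancel₀ _ ha.ne'] at h
    rw [hS1]; linarith
  refine ⟨hS0, hS0_pos, hS1, hS1_pos, fun hc => ?_⟩
  have hlead : -l2 * (a + (1 + l1) * d2) < 0 := by nlinarith
  rw [hS] at hS0_pos hS1_pos
  obtain ⟨ym, -, hym, -, hSym, -⟩ := exists_quadratic_roots_around hlead hS0_pos
  obtain ⟨-, yp, -, hyp, -, hSyp⟩ := exists_quadratic_roots_around hlead hS1_pos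
  exact ⟨ym, yp, hym, hyp, by rw [hS, hSym], by rw [hS, hSyp]⟩

/-- Appendix: positivity of the polynomial `S` at `0` and `1`, and location of
its two real roots when `a + (1+λ1)d2 > 0`. -/
theorem polynomial_S_roots (a A2 l1 l2 d2 : ℝ)
    (ha : 0 < a) (hA2 : 0 < A2) (hl1 : 0 < l1) (hl2 : 0 < l2)
    (hd2 : d2 < 0) (hstab : l2 < A2 + d2 * l1 / a) :
    let S : ℝ → ℝ := fun y =>
      -l2 * (a + (1 + l1) * d2) * y ^ 2 +
        ((l1 + l2 + l1 * l2) * d2 + A2 * (d2 + a)) * y - A2 * d2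
    S 0 = -A2 * d2 ∧ 0 < S 0 ∧
      S 1 = a * A2 - l2 * a + l1 * d2 ∧ 0 < S 1 ∧
      (0 < a + (1 + l1) * d2 →
        ∃ ym yp : ℝ, ym < 0 ∧ 1 < yp ∧ S ym = 0 ∧ S yp = 0) :=
  polynomial_S_roots_general a A2 l1 l2 d2 ha hA2 hl2 hd2 hstab
end
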